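/- Let F be a first-order formula, p a unary predicate, x a variable that does not occur free in F, p' a fresh unary predicate, and let F' denote F with p replaced by p'. Then: (a) every Craig interpolant H of F ∧ p(x) and ¬(F' ∧ ¬p'(x)) is a definiens of p within F, i.e., F ⊨ ∀x (p(x) ↔ H) and p does not occur in H; and (b) a definiens of p within F exists if and only if F ∧ p(x) ⊨ ¬(F' ∧ ¬p'(x)). -/

import Mathlib

open Classical

namespace CTIF

/-- First-order terms: variables and applications of function symbols
(a function symbol is a natural number used with an arity). -/
inductive Tm : Type where
  | var : ℕ → Tm
  | app : ℕ → (n : ℕ) → (Fin n → Tm) → Tm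

/-- First-order formulas without equality. -/
inductive Fml : Type where
  | tru : Fml
  | fls : Fml
  | atom : ℕ → (n : ℕ) → (Fin n → Tm) → Fml
  | neg : Fml → Fml
  | conj : Fml → Fml → Fml
  | disj : Fml → Fml → Fml
  | all : ℕ → Fml → Fml
  | exi : ℕ → Fml → Fml

/-- A structure: interpretation of all function and predicate symbols (at every arity). -/
structure Struc (D : Type) : Type where
  fn : ℕ → (n : ℕ) → (Fin n → D) → D
  pr : ℕ → (n : ℕ) → (Fin n → D) → Prop

def Tm.eval {D : Type} (M : Struc D) (a : ℕ → D) : Tm → D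
  | .var x => a x
  | .app f n ts => M.fn f n (fun i => (ts i).eval M a)

def Fml.sat {D : Type} : Fml → Struc D → (ℕ → D) → Prop
  | .tru, _, _ => True
  | .fls, _, _ => False
  | .atom p n ts, M, a => M.pr p n (fun i => (ts i).eval M a)
  | .neg F, M, a => ¬ F.sat M a
  | .conj F G, M, a => F.sat M a ∧ G.sat M a
  | .disj F G, M, a => F.sat M a ∨ G.sat M a
  | .all x F, M, a => ∀ d, F.sat M (Function.update a x d)
  | .exi x F, M, a => ∃ d, F.sat M (Function.update a x d)

/-- Entailment: every model (with any variable assignment) of `F` satisfies `G`. -/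
def entails (F G : Fml) : Prop :=
  ∀ (D : Type), Nonempty D → ∀ (M : Struc D) (a : ℕ → D), F.sat M a → G.sat M a

def Tm.vars : Tm → Set ℕ
  | .var x => {x}
  | .app _ _ ts => ⋃ i, (ts i).vars

/-- Function symbols (with their arity) occurring in a term. -/
def Tm.funs : Tm → Set (ℕ × ℕ)
  | .var _ => ∅
  | .app f n ts => insert (f, n) (⋃ i, (ts i).funs)

def Tm.isGround (t : Tm) : Prop := t.vars = ∅

/-- `t` is a ground term all of whose function symbols come from `S`. -/
def Tm.builtFrom (S : Set (ℕ × ℕ)) : Tm → Prop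
  | .var _ => False
  | .app f n ts => (f, n) ∈ S ∧ ∀ i, Tm.builtFrom S (ts i)

/-- `t` occurs (as a subterm) in the given term. -/
def Tm.occursIn (t : Tm) : Tm → Prop
  | .var x => t = Tm.var x
  | .app f n ts => t = Tm.app f n ts ∨ ∃ i, Tm.occursIn t (ts i)

/-- `s` is a strict subterm of `t`. -/
def Tm.strictSub (s t : Tm) : Prop := s ≠ t ∧ s.occursIn t

def Fml.funs : Fml → Set (ℕ × ℕ)
  | .tru => ∅
  | .fls => ∅
  | .atom _ _ ts => ⋃ i, (ts i).funs
  | .neg F => F.funs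
  | .conj F G => F.funs ∪ G.funs
  | .disj F G => F.funs ∪ G.funs
  | .all _ F => F.funs
  | .exi _ F => F.funs

/-- Predicate symbols with the polarity (`true` = positive) of their occurrences;
the second argument is the polarity of the context. -/
def Fml.preds : Fml → Bool → Set (ℕ × Bool)
  | .tru, _ => ∅
  | .fls, _ => ∅
  | .atom p _ _, pol => {(p, pol)}
  | .neg F, pol => F.preds (!pol)
  | .conj F G, pol => F.preds pol ∪ G.preds pol
  | .disj F G, pol => F.preds pol ∪ G.preds pol
  | .all _ F, pol => F.preds pol
  | .exi _ F, pol => F.preds pol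

/-- pred(F): predicates paired with the polarities of their occurrences in `F`. -/
def Fml.pred (F : Fml) : Set (ℕ × Bool) := F.preds true

/-- Predicate symbols occurring in a formula (disregarding polarity). -/
def Fml.predSyms : Fml → Set ℕ
  | .tru => ∅
  | .fls => ∅
  | .atom p _ _ => {p}
  | .neg F => F.predSyms
  | .conj F G => F.predSyms ∪ G.predSyms
  | .disj F G => F.predSyms ∪ G.predSyms
  | .all _ F => F.predSyms
  | .exi _ F => F.predSyms

def Fml.free : Fml → Set ℕ
  | .tru => ∅
  | .fls => ∅
  | .atom _ _ ts => ⋃ i, (ts i).vars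
  | .neg F => F.free
  | .conj F G => F.free ∪ G.free
  | .disj F G => F.free ∪ G.free
  | .all x F => F.free \ {x}
  | .exi x F => F.free \ {x}

/-- Variables occurring bound (i.e. quantified upon) in a formula. -/
def Fml.bound : Fml → Set ℕ
  | .tru => ∅
  | .fls => ∅
  | .atom _ _ _ => ∅
  | .neg F => F.bound
  | .conj F G => F.bound ∪ G.bound
  | .disj F G => F.bound ∪ G.bound
  | .all x F => insert x F.bound
  | .exi x F => insert x F.bound

def Fml.isQF : Fml → Prop
  | .tru => True
  | .fls => True
  | .atom _ _ _ => True
  | .neg F => F.isQF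
  | .conj F G => F.isQF ∧ G.isQF
  | .disj F G => F.isQF ∧ G.isQF
  | .all _ _ => False
  | .exi _ _ => False

def Fml.isGround (F : Fml) : Prop := F.isQF ∧ F.free = ∅

def Fml.isSentence (F : Fml) : Prop := F.free = ∅

/-- Substitutions: mappings from variables to terms. -/
abbrev Subst := ℕ → Tm

def Subst.dom (σ : Subst) : Set ℕ := {x | σ x ≠ Tm.var x}

def Subst.rng (σ : Subst) : Set Tm := {t | ∃ x ∈ σ.dom, σ x = t}

def Subst.isGround (σ : Subst) : Prop := ∀ x ∈ σ.dom, (σ x).isGround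

/-- Injective substitution: distinct domain variables are mapped to distinct terms. -/
def Subst.inj (σ : Subst) : Prop := ∀ x ∈ σ.dom, ∀ y ∈ σ.dom, σ x = σ y → x = y

def Tm.subst (σ : Subst) : Tm → Tm
  | .var x => σ x
  | .app f n ts => .app f n (fun i => (ts i).subst σ)

/-- Substitution application to formulas (free occurrences of variables are replaced). -/
def Fml.subst (σ : Subst) : Fml → Fml
  | .tru => .tru
  | .fls => .fls
  | .atom p n ts => .atom p n (fun i => (ts i).subst σ)
  | .neg F => .neg (F.subst σ)
  | .conj F G => .conj (F.subst σ) (G.subst σ)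
  | .disj F G => .disj (F.subst σ) (G.subst σ)
  | .all x F => .all x (F.subst (Function.update σ x (Tm.var x)))
  | .exi x F => .exi x (F.subst (Function.update σ x (Tm.var x)))

/-- Inverse application of an injective substitution to a term:
all rng(σ)-maximal occurrences of terms in the range of σ are replaced by
the corresponding domain variable. -/
noncomputable def Tm.inv (σ : Subst) : Tm → Tm
  | .var x =>
      if h : ∃ v ∈ Subst.dom σ, σ v = Tm.var x then Tm.var h.choose else Tm.var x
  | .app f n ts =>
      if h : ∃ v ∈ Subst.dom σ, σ v = Tm.app f n ts then Tm.var h.choose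
      else .app f n (fun i => Tm.inv σ (ts i))

/-- Inverse application of an injective substitution to a formula. -/
noncomputable def Fml.inv (σ : Subst) : Fml → Fml
  | .tru => .tru
  | .fls => .fls
  | .atom p n ts => .atom p n (fun i => Tm.inv σ (ts i))
  | .neg F => .neg (F.inv σ)
  | .conj F G => .conj (F.inv σ) (G.inv σ)
  | .disj F G => .disj (F.inv σ) (G.inv σ)
  | .all x F => .all x (F.inv σ)
  | .exi x F => .exi x (F.inv σ)

/-- `H` is a Craig-Lyndon interpolant of `F` and `G`. -/
def CLInterp (F G H : Fml) : Prop :=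
  entails F H ∧ entails H G ∧
  H.pred ⊆ F.pred ∩ G.pred ∧
  H.funs ⊆ F.funs ∩ G.funs ∧
  H.free ⊆ F.free ∩ G.free

/-- `H` is a Craig interpolant of `F` and `G` (no polarity constraint). -/
def CraigInterp (F G H : Fml) : Prop :=
  entails F H ∧ entails H G ∧
  H.predSyms ⊆ F.predSyms ∩ G.predSyms ∧
  H.funs ⊆ F.funs ∩ G.funs ∧
  H.free ⊆ F.free ∩ G.free

/-- An S-term: a term whose outermost function symbol is in `S`. -/
def isSTerm (S : Set (ℕ × ℕ)) : Tm → Prop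
  | .var _ => False
  | .app f n _ => (f, n) ∈ S

def STerms (S : Set (ℕ × ℕ)) : Set Tm := {t | isSTerm S t}

/-- `t` has a `T`-maximal occurrence in the given term: an occurrence that is
not within an occurrence of another member of `T`. -/
def Tm.hasMaxOcc (T : Set Tm) (t : Tm) : Tm → Prop
  | .var x => Tm.var x ∈ T ∧ t = Tm.var x
  | .app f n ts =>
      (Tm.app f n ts ∈ T ∧ t = Tm.app f n ts) ∨
      (Tm.app f n ts ∉ T ∧ ∃ i, Tm.hasMaxOcc T t (ts i))

/-- `t` has a `T`-maximal occurrence in the formula. -/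
def Fml.hasMaxOcc (T : Set Tm) (t : Tm) : Fml → Prop
  | .tru => False
  | .fls => False
  | .atom _ _ ts => ∃ i, Tm.hasMaxOcc T t (ts i)
  | .neg F => F.hasMaxOcc T t
  | .conj F G => F.hasMaxOcc T t ∨ G.hasMaxOcc T t
  | .disj F G => F.hasMaxOcc T t ∨ G.hasMaxOcc T t
  | .all _ F => F.hasMaxOcc T t
  | .exi _ F => F.hasMaxOcc T t

/-- Universal quantification over a list of variables. -/
def alls (xs : List ℕ) (F : Fml) : Fml := xs.foldr Fml.all F

end CTIF
namespace CTIF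

/-- Renaming of a predicate symbol: every occurrence of `p` becomes `q`. -/
def Fml.renamePred (p q : ℕ) : Fml → Fml
  | .tru => .tru
  | .fls => .fls
  | .atom r n ts => .atom (if r = p then q else r) n ts
  | .neg F => .neg (F.renamePred p q)
  | .conj F G => .conj (F.renamePred p q) (G.renamePred p q)
  | .disj F G => .disj (F.renamePred p q) (G.renamePred p q)
  | .all x F => .all x (F.renamePred p q)
  | .exi x F => .exi x (F.renamePred p q)

/-- A ↔ B, expressed with the available connectives. -/
def iffFml (A B : Fml) : Fml := .conj (.disj (.neg A) B) (.disj (.neg B) A)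

/-- The atom p(x). -/
def atom1 (p x : ℕ) : Fml := .atom p 1 (fun _ => Tm.var x)

/-- `H` is a definiens of the unary predicate `p` within `F` (relative to the
variable `x`): F ⊨ ∀x (p(x) ↔ H) and `p` does not occur in `H`. -/
def isDefiniens (F : Fml) (p x : ℕ) (H : Fml) : Prop :=
  entails F (.all x (iffFml (atom1 p x) H)) ∧ p ∉ H.predSyms

/-!
Parts (a) and (b, ⇒) are semantic: reading `p'` as `p` turns a model of `F` into a model of `F'`
with the same truth values for formulas without `p'`, and reading `p` as `p'` does the converse.
For (b, ⇐), any interpolant of `F ∧ p(x) ⊨ ¬(F' ∧ ¬p'(x))` avoids `p` and `p'`, hence is a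
definiens by (a); so what remains is Craig interpolation for predicate symbols. Replace the free
variables of `A ⊨ B` by fresh constants. If no sentence over the common predicates separates `A`
from `¬B`, a Henkin completion extends `{A}` and `{¬B}` to maximal consistent sets with witnesses
that still cannot be separated; their term models then agree on all common atoms and merge into
a model of `A ∧ ¬B`.
-/

/-! ### Reinterpretation and substitution -/

theorem Tm.eval_congr {D : Type} {M M' : Struc D} {a b : ℕ → D} {t : Tm}
    (hfn : ∀ f n, (f, n) ∈ t.funs → M.fn f n = M'.fn f n) (hv : ∀ v ∈ t.vars, a v = b v) :
    t.eval M a = t.eval M' b := by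
  induction t with
  | var x => exact hv x rfl
  | app f n ts ih =>
    simp only [Tm.funs, Set.mem_insert_iff, Set.mem_iUnion, Tm.vars] at hfn hv
    simp only [Tm.eval, hfn f n (Or.inl rfl)]
    exact congrArg _ (funext fun i =>
      ih i (fun g m hg => hfn g m (Or.inr ⟨i, hg⟩)) (fun v hv' => hv v ⟨i, hv'⟩))

theorem Tm.eval_eq_of_vars_eq_empty {D : Type} {M : Struc D} {t : Tm} (h : t.vars = ∅)
    (a b : ℕ → D) : t.eval M a = t.eval M b :=
  Tm.eval_congr (fun _ _ _ => rfl) (by simp [h])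

theorem eqOn_update_of_eqOn_diff {D : Type} {s : Set ℕ} {a b : ℕ → D} (x : ℕ) (d : D)
    (h : Set.EqOn a b (s \ {x})) : Set.EqOn (Function.update a x d) (Function.update b x d) s := by
  intro v hv
  rcases eq_or_ne v x with rfl | hne
  · simp
  · simp only [Function.update_of_ne hne]
    exact h ⟨hv, hne⟩

theorem Fml.sat_congr {D : Type} {M M' : Struc D} (F : Fml) {a b : ℕ → D}
    (hfn : ∀ f n, (f, n) ∈ F.funs → M.fn f n = M'.fn f n)
    (hpr : ∀ r ∈ F.predSyms, M.pr r = M'.pr r) (hv : ∀ v ∈ F.free, a v = b v) :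
    F.sat M a ↔ F.sat M' b := by
  induction F generalizing a b with
  | tru | fls => rfl
  | atom r n ts =>
    simp only [Fml.funs, Fml.free, Set.mem_iUnion] at hfn hv
    simp only [Fml.sat, hpr r rfl]
    exact Iff.of_eq (congrArg _ (funext fun i =>
      Tm.eval_congr (fun g m hg => hfn g m ⟨i, hg⟩) (fun v hv' => hv v ⟨i, hv'⟩)))
  | neg F ih => exact not_congr (ih hfn hpr hv)
  | conj F G ihF ihG | disj F G ihF ihG =>
    simp only [Fml.sat]
    rw [ihF (fun f n h => hfn f n (Or.inl h)) (fun r h => hpr r (Or.inl h))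
        (fun v h => hv v (Or.inl h)),
      ihG (fun f n h => hfn f n (Or.inr h)) (fun r h => hpr r (Or.inr h))
        (fun v h => hv v (Or.inr h))]
  | all x F ih | exi x F ih =>
    simp only [Fml.sat, ih hfn hpr (eqOn_update_of_eqOn_diff x _ hv)]

theorem Fml.sat_iff_of_free_eq_empty {D : Type} {M : Struc D} {F : Fml} (h : F.free = ∅)
    (a b : ℕ → D) : F.sat M a ↔ F.sat M b :=
  F.sat_congr (fun _ _ _ => rfl) (fun _ _ => rfl) (by simp [h])

def Struc.updatePred {D : Type} (M : Struc D) (p : ℕ) (P : (n : ℕ) → (Fin n → D) → Prop) :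
    Struc D :=
  ⟨M.fn, Function.update M.pr p P⟩

theorem Tm.eval_updatePred {D : Type} {M : Struc D} {a : ℕ → D} (p : ℕ) (P) (t : Tm) :
    t.eval (M.updatePred p P) a = t.eval M a :=
  Tm.eval_congr (fun _ _ _ => rfl) (fun _ _ => rfl)

theorem Fml.sat_updatePred_of_not_mem {D : Type} {M : Struc D} {a : ℕ → D} {p : ℕ} {F : Fml}
    (h : p ∉ F.predSyms) (P) : F.sat (M.updatePred p P) a ↔ F.sat M a :=
  F.sat_congr (fun _ _ _ => rfl)
    (fun _ hr => Function.update_of_ne (ne_of_mem_of_not_mem hr h) _ _) (fun _ _ => rfl)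

theorem Fml.sat_renamePred {D : Type} {M : Struc D} (p q : ℕ) (F : Fml) (a : ℕ → D) :
    (F.renamePred p q).sat M a ↔ F.sat (M.updatePred p (M.pr q)) a := by
  induction F generalizing a with
  | tru | fls => rfl
  | atom r n ts =>
    simp only [Fml.renamePred, Fml.sat, Tm.eval_updatePred]
    by_cases h : r = p
    · subst h; simp [Struc.updatePred]
    · simp [Struc.updatePred, h]
  | neg F ih => exact not_congr (ih a)
  | conj F G ihF ihG | disj F G ihF ihG => simp only [Fml.renamePred, Fml.sat, ihF, ihG]
  | all x F ih | exi x F ih => simp only [Fml.renamePred, Fml.sat, ih]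

theorem Fml.not_mem_predSyms_renamePred {p q : ℕ} (h : q ≠ p) (F : Fml) :
    p ∉ (F.renamePred p q).predSyms := by
  induction F with
  | atom r n ts =>
    simp only [Fml.renamePred, Fml.predSyms, Set.mem_singleton_iff]
    split_ifs with hr <;> grind
  | _ => simp_all [Fml.renamePred, Fml.predSyms]

theorem Subst.isGround.update_var {σ : Subst} (h : σ.isGround) (x : ℕ) :
    Subst.isGround (Function.update σ x (Tm.var x)) := by
  intro v hv
  rcases eq_or_ne v x with rfl | hne
  · simp [Subst.dom] at hv
  · simp only [Subst.dom, Set.mem_ofPred_eq, Function.update_of_ne hne] at hv ⊢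
    exact h v hv

theorem Subst.isGround_update {x : ℕ} {t : Tm} (ht : t.vars = ∅) :
    Subst.isGround (Function.update Tm.var x t) := by
  intro v hv
  rcases eq_or_ne v x with rfl | hne
  · simpa [Tm.isGround] using ht
  · simp [Subst.dom, Function.update_of_ne hne] at hv

theorem Tm.eval_subst {D : Type} {M : Struc D} {a : ℕ → D} (σ : Subst) (t : Tm) :
    (t.subst σ).eval M a = t.eval M (fun v => (σ v).eval M a) := by
  induction t with
  | var x => rfl
  | app f n ts ih => simp only [Tm.subst, Tm.eval, ih]

theorem Subst.isGround.eval_update {D : Type} {M : Struc D} {σ : Subst} (hσ : σ.isGround)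
    (a : ℕ → D) (x : ℕ) (d : D) :
    (fun v => (Function.update σ x (Tm.var x) v).eval M (Function.update a x d)) =
      Function.update (fun v => (σ v).eval M a) x d := by
  funext v
  rcases eq_or_ne v x with rfl | hne
  · simp [Tm.eval]
  · simp only [Function.update_of_ne hne]
    by_cases hv : σ v = Tm.var v
    · simp [hv, Tm.eval, Function.update_of_ne hne]
    · exact Tm.eval_eq_of_vars_eq_empty (hσ v hv) _ _

theorem Fml.sat_subst {D : Type} {M : Struc D} (F : Fml) {σ : Subst} (hσ : σ.isGround)
    (a : ℕ → D) : (F.subst σ).sat M a ↔ F.sat M (fun v => (σ v).eval M a) := by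
  induction F generalizing σ a with
  | tru | fls => rfl
  | atom p n ts => simp only [Fml.subst, Fml.sat, Tm.eval_subst]
  | neg F ih => exact not_congr (ih hσ a)
  | conj F G ihF ihG | disj F G ihF ihG => simp only [Fml.subst, Fml.sat, ihF hσ, ihG hσ]
  | all x F ih | exi x F ih =>
    simp only [Fml.subst, Fml.sat, ih (hσ.update_var x), hσ.eval_update]

theorem Fml.sat_subst_update {D : Type} {M : Struc D} (F : Fml) {x : ℕ} {t : Tm}
    (ht : t.vars = ∅) (a : ℕ → D) :
    (F.subst (Function.update Tm.var x t)).sat M a ↔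
      F.sat M (Function.update a x (t.eval M a)) := by
  rw [F.sat_subst (Subst.isGround_update ht)]
  congr! 1
  funext v
  rcases eq_or_ne v x with rfl | hne
  · simp
  · simp [Function.update_of_ne hne, Tm.eval]

theorem Fml.predSyms_subst (F : Fml) (σ : Subst) : (F.subst σ).predSyms = F.predSyms := by
  induction F generalizing σ <;> simp_all [Fml.subst, Fml.predSyms]

def Fml.size : Fml → ℕ
  | .tru | .fls | .atom _ _ _ => 0
  | .neg F | .all _ F | .exi _ F => F.size + 1
  | .conj F G | .disj F G => F.size + G.size + 1

theorem Fml.size_subst (F : Fml) (σ : Subst) : (F.subst σ).size = F.size := by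
  induction F generalizing σ <;> simp_all [Fml.subst, Fml.size]

theorem Tm.vars_subst (σ : Subst) (t : Tm) :
    ∀ u ∈ (t.subst σ).vars, ∃ v ∈ t.vars, u ∈ (σ v).vars := by
  induction t with
  | var x => exact fun u hu => ⟨x, rfl, hu⟩
  | app f n ts ih =>
    simp only [Tm.subst, Tm.vars, Set.mem_iUnion]
    rintro u ⟨i, hi⟩
    obtain ⟨v, hv, hu⟩ := ih i u hi
    exact ⟨v, ⟨i, hv⟩, hu⟩

theorem Fml.free_subst (F : Fml) (σ : Subst) :
    ∀ u ∈ (F.subst σ).free, ∃ v ∈ F.free, u ∈ (σ v).vars := by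
  induction F generalizing σ with
  | tru | fls => simp [Fml.subst, Fml.free]
  | atom p n ts =>
    simp only [Fml.subst, Fml.free, Set.mem_iUnion]
    rintro u ⟨i, hi⟩
    obtain ⟨v, hv, hu⟩ := Tm.vars_subst σ (ts i) u hi
    exact ⟨v, ⟨i, hv⟩, hu⟩
  | neg F ih => exact ih σ
  | conj F G ihF ihG | disj F G ihF ihG =>
    rintro u (hu | hu)
    · obtain ⟨v, hv, hu⟩ := ihF σ u hu; exact ⟨v, Or.inl hv, hu⟩
    · obtain ⟨v, hv, hu⟩ := ihG σ u hu; exact ⟨v, Or.inr hv, hu⟩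
  | all x F ih | exi x F ih =>
    rintro u ⟨hu, hux⟩
    obtain ⟨v, hv, hu⟩ := ih _ u hu
    rcases eq_or_ne v x with rfl | hne
    · simp [Tm.vars] at hu hux; exact absurd hu hux
    · rw [Function.update_of_ne hne] at hu
      exact ⟨v, ⟨hv, hne⟩, hu⟩

theorem Tm.funs_subst (σ : Subst) (t : Tm) :
    ∀ g ∈ (t.subst σ).funs, g ∈ t.funs ∨ ∃ v ∈ t.vars, g ∈ (σ v).funs := by
  induction t with
  | var x => exact fun g hg => Or.inr ⟨x, rfl, hg⟩
  | app f n ts ih =>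
    simp only [Tm.subst, Tm.funs, Tm.vars, Set.mem_insert_iff, Set.mem_iUnion]
    rintro g (rfl | ⟨i, hi⟩)
    · exact Or.inl (Or.inl rfl)
    · rcases ih i g hi with h | ⟨v, hv, h⟩
      exacts [Or.inl (Or.inr ⟨i, h⟩), Or.inr ⟨v, ⟨i, hv⟩, h⟩]

theorem Fml.funs_subst (F : Fml) (σ : Subst) :
    ∀ g ∈ (F.subst σ).funs, g ∈ F.funs ∨ ∃ v ∈ F.free, g ∈ (σ v).funs := by
  induction F generalizing σ with
  | tru | fls => simp [Fml.subst, Fml.funs]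
  | atom p n ts =>
    simp only [Fml.subst, Fml.funs, Fml.free, Set.mem_iUnion]
    rintro g ⟨i, hi⟩
    rcases Tm.funs_subst σ (ts i) g hi with h | ⟨v, hv, h⟩
    exacts [Or.inl ⟨i, h⟩, Or.inr ⟨v, ⟨i, hv⟩, h⟩]
  | neg F ih => exact ih σ
  | conj F G ihF ihG | disj F G ihF ihG =>
    rintro g (hg | hg)
    · rcases ihF σ g hg with h | ⟨v, hv, h⟩
      exacts [Or.inl (Or.inl h), Or.inr ⟨v, Or.inl hv, h⟩]
    · rcases ihG σ g hg with h | ⟨v, hv, h⟩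
      exacts [Or.inl (Or.inr h), Or.inr ⟨v, Or.inr hv, h⟩]
  | all x F ih | exi x F ih =>
    intro g hg
    rcases ih _ g hg with h | ⟨v, hv, h⟩
    · exact Or.inl h
    rcases eq_or_ne v x with rfl | hne
    · simp [Tm.funs] at h
    · rw [Function.update_of_ne hne] at h
      exact Or.inr ⟨v, ⟨hv, hne⟩, h⟩

theorem Fml.free_finite (F : Fml) : F.free.Finite := by
  induction F with
  | tru | fls => simp [Fml.free]
  | atom p n ts =>
    refine Set.finite_iUnion fun i => ?_
    induction ts i with
    | var x => simp [Tm.vars]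
    | app f n ts ih => exact Set.finite_iUnion ih
  | neg F ih => exact ih
  | conj F G ihF ihG | disj F G ihF ihG => exact ihF.union ihG
  | all x F ih | exi x F ih => exact ih.sdiff

theorem Fml.bound_finite (F : Fml) : F.bound.Finite := by
  induction F with
  | tru | fls | atom => simp [Fml.bound]
  | neg F ih => exact ih
  | conj F G ihF ihG | disj F G ihF ihG => exact ihF.union ihG
  | all x F ih | exi x F ih => exact ih.insert _

theorem Fml.funs_finite (F : Fml) : F.funs.Finite := by
  induction F with
  | tru | fls => simp [Fml.funs]
  | atom p n ts =>
    refine Set.finite_iUnion fun i => ?_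
    induction ts i with
    | var x => simp [Tm.funs]
    | app f n ts ih => exact (Set.finite_iUnion ih).insert _
  | neg F ih => exact ih
  | conj F G ihF ihG | disj F G ihF ihG => exact ihF.union ihG
  | all x F ih | exi x F ih => exact ih

noncomputable def Struc.setConsts {D : Type} (M : Struc D) (s : ℕ → Prop) (g : ℕ → D) : Struc D :=
  ⟨fun f n ds => if n = 0 ∧ s f then g f else M.fn f n ds, M.pr⟩

noncomputable def Tm.abstractConsts (s : ℕ → Prop) (w : ℕ → ℕ) : Tm → Tm
  | .var y => .var y
  | .app f n ts =>
    if n = 0 ∧ s f then .var (w f) else .app f n (fun i => (ts i).abstractConsts s w)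

noncomputable def Fml.abstractConsts (s : ℕ → Prop) (w : ℕ → ℕ) : Fml → Fml
  | .tru => .tru
  | .fls => .fls
  | .atom p n ts => .atom p n (fun i => (ts i).abstractConsts s w)
  | .neg F => .neg (F.abstractConsts s w)
  | .conj F G => .conj (F.abstractConsts s w) (G.abstractConsts s w)
  | .disj F G => .disj (F.abstractConsts s w) (G.abstractConsts s w)
  | .all x F => .all x (F.abstractConsts s w)
  | .exi x F => .exi x (F.abstractConsts s w)

section abstractConsts

variable (s : ℕ → Prop) (w : ℕ → ℕ)

theorem Tm.eval_abstractConsts {D : Type} {M : Struc D} {a : ℕ → D} (t : Tm) :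
    (t.abstractConsts s w).eval M a = t.eval (M.setConsts s (a ∘ w)) a := by
  induction t with
  | var y => rfl
  | app f n ts ih =>
    by_cases h : n = 0 ∧ s f
    · simp only [Tm.abstractConsts, if_pos h, Tm.eval, Struc.setConsts]; rfl
    · simp only [Tm.abstractConsts, if_neg h, Tm.eval, Struc.setConsts, ih]

theorem Fml.sat_abstractConsts {D : Type} {M : Struc D} (F : Fml) (a : ℕ → D)
    (h : ∀ f, s f → (f, 0) ∈ F.funs → w f ∉ F.bound) :
    (F.abstractConsts s w).sat M a ↔ F.sat (M.setConsts s (a ∘ w)) a := by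
  induction F generalizing a with
  | tru | fls => rfl
  | atom p n ts => simp only [Fml.abstractConsts, Fml.sat, Tm.eval_abstractConsts]; rfl
  | neg F ih => exact not_congr (ih a h)
  | conj F G ihF ihG | disj F G ihF ihG =>
    simp only [Fml.abstractConsts, Fml.sat]
    rw [ihF a fun f hf h' => h f hf (Or.inl h') ∘ Or.inl,
      ihG a fun f hf h' => h f hf (Or.inr h') ∘ Or.inr]
  | all x F ih | exi x F ih =>
    simp only [Fml.abstractConsts, Fml.sat]
    -- the bound variable `x` is not among the `w f`, so updating it does not move the constants
    have hagree : ∀ d, (F.sat (M.setConsts s (Function.update a x d ∘ w)) (Function.update a x d) ↔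
        F.sat (M.setConsts s (a ∘ w)) (Function.update a x d)) := fun d =>
      F.sat_congr (fun f n hf => by
        unfold Struc.setConsts
        by_cases hfn : n = 0 ∧ s f
        · obtain ⟨rfl, hf'⟩ := hfn
          have hwx : w f ≠ x := fun he => h f hf' hf (he ▸ Set.mem_insert _ _)
          simp [hf', Function.update_of_ne hwx]
        · simp only [if_neg hfn]) (fun _ _ => rfl) (fun _ _ => rfl)
    simp only [ih _ fun f hf h' hb => h f hf h' (Set.mem_insert_of_mem _ hb), hagree]

theorem Fml.predSyms_abstractConsts (F : Fml) :
    (F.abstractConsts s w).predSyms = F.predSyms := by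
  induction F <;> simp_all [Fml.abstractConsts, Fml.predSyms]

theorem Fml.bound_abstractConsts (F : Fml) : (F.abstractConsts s w).bound = F.bound := by
  induction F <;> simp_all [Fml.abstractConsts, Fml.bound]

theorem Tm.vars_abstractConsts (t : Tm) :
    ∀ u ∈ (t.abstractConsts s w).vars, u ∈ t.vars ∨ ∃ f, s f ∧ w f = u := by
  induction t with
  | var y => exact fun u hu => Or.inl hu
  | app f n ts ih =>
    by_cases h : n = 0 ∧ s f
    · simp only [Tm.abstractConsts, if_pos h, Tm.vars, Set.mem_singleton_iff]
      rintro u rfl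
      exact Or.inr ⟨f, h.2, rfl⟩
    · simp only [Tm.abstractConsts, if_neg h, Tm.vars, Set.mem_iUnion]
      rintro u ⟨i, hi⟩
      exact (ih i u hi).imp_left fun hu => ⟨i, hu⟩

theorem Fml.free_abstractConsts (F : Fml) :
    ∀ u ∈ (F.abstractConsts s w).free, u ∈ F.free ∨ ∃ f, s f ∧ w f = u := by
  induction F with
  | tru | fls => simp [Fml.abstractConsts, Fml.free]
  | atom p n ts =>
    simp only [Fml.abstractConsts, Fml.free, Set.mem_iUnion]
    rintro u ⟨i, hi⟩
    exact (Tm.vars_abstractConsts s w (ts i) u hi).imp_left fun hu => ⟨i, hu⟩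
  | neg F ih => exact ih
  | conj F G ihF ihG | disj F G ihF ihG =>
    rintro u (hu | hu)
    exacts [(ihF u hu).imp_left Or.inl, (ihG u hu).imp_left Or.inr]
  | all x F ih | exi x F ih =>
    rintro u ⟨hu, hux⟩
    exact (ih u hu).imp_left fun h => ⟨h, hux⟩

theorem Tm.funs_abstractConsts (t : Tm) : (t.abstractConsts s w).funs ⊆ t.funs := by
  induction t with
  | var y => exact le_rfl
  | app f n ts ih =>
    by_cases h : n = 0 ∧ s f
    · simp [Tm.abstractConsts, if_pos h, Tm.funs]
    · simp only [Tm.abstractConsts, if_neg h, Tm.funs]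
      exact Set.insert_subset_insert (Set.iUnion_mono ih)

theorem Fml.funs_abstractConsts (F : Fml) : (F.abstractConsts s w).funs ⊆ F.funs := by
  induction F with
  | tru | fls => exact le_rfl
  | atom p n ts => exact Set.iUnion_mono fun i => Tm.funs_abstractConsts s w (ts i)
  | neg F ih | all x F ih | exi x F ih => exact ih
  | conj F G ihF ihG | disj F G ihF ihG => exact Set.union_subset_union ihF ihG

end abstractConsts

/-! ### Separating sentences -/

def Tm.const (c : ℕ) : Tm := .app c 0 Fin.elim0

@[simp] theorem Tm.vars_const (c : ℕ) : (Tm.const c).vars = ∅ := by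
  simp [Tm.const, Tm.vars]

@[simp] theorem Tm.funs_const (c : ℕ) : (Tm.const c).funs = {(c, 0)} := by
  simp [Tm.const, Tm.funs]

theorem Fml.sat_setConsts_of_not_mem {D : Type} {M : Struc D} {a : ℕ → D} {φ : Fml} {c : ℕ}
    (hc : (c, 0) ∉ φ.funs) (g : ℕ → D) : φ.sat (M.setConsts (· = c) g) a ↔ φ.sat M a :=
  φ.sat_congr (fun f n hf => funext fun _ => if_neg (by rintro ⟨rfl, rfl⟩; exact hc hf))
    (fun _ _ => rfl) (fun _ _ => rfl)

theorem Fml.sat_subst_const_setConsts {D : Type} {M : Struc D} {a : ℕ → D} {ψ : Fml}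
    {x c : ℕ} (hc : (c, 0) ∉ ψ.funs) (d : D) :
    (ψ.subst (Function.update Tm.var x (Tm.const c))).sat (M.setConsts (· = c) fun _ => d) a ↔
      ψ.sat M (Function.update a x d) := by
  rw [ψ.sat_subst_update (Tm.vars_const c),
    show (Tm.const c).eval _ a = d by simp [Tm.const, Tm.eval, Struc.setConsts]]
  exact Fml.sat_setConsts_of_not_mem hc _

theorem Fml.sat_abstractConst {D : Type} {M : Struc D} {a : ℕ → D} {θ : Fml} {c y : ℕ}
    (hθ : θ.free = ∅) (hy : y ∉ θ.bound) (e : D) :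
    (θ.abstractConsts (· = c) fun _ => y).sat M (Function.update a y e) ↔
      θ.sat (M.setConsts (· = c) fun _ => e) a := by
  rw [θ.sat_abstractConsts _ _ _ fun _ _ _ => hy]
  simpa [Function.comp_def] using θ.sat_iff_of_free_eq_empty hθ _ _

def entailsList (Γ : List Fml) (G : Fml) : Prop :=
  ∀ (D : Type), Nonempty D → ∀ (M : Struc D) (a : ℕ → D), (∀ φ ∈ Γ, φ.sat M a) → G.sat M a

theorem entailsList.mono {Γ Γ' : List Fml} {G : Fml} (h : Γ ⊆ Γ') (hΓ : entailsList Γ G) :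
    entailsList Γ' G :=
  fun D hD M a ha => hΓ D hD M a fun φ hφ => ha φ (h hφ)

/-- The constant `N + 2 * v` stands for the free variable `v` of an interpolation problem whose
variables are all `< K`. Constants `N + 2 * v` with `K ≤ v` are not admissible and separators bind
only variables `≥ K`, so turning constants back into variables never causes capture; the constants
`N + 2 * m + 1` are a supply of fresh witnesses. -/
structure Setup where
  N : ℕ
  K : ℕ

namespace Setup

variable (S : Setup)

def Admissible (f n : ℕ) : Prop := ∀ v, S.K ≤ v → (f, n) ≠ (S.N + 2 * v, 0)

def IsClosedTerm (t : Tm) : Prop := t.vars = ∅ ∧ ∀ f n, (f, n) ∈ t.funs → S.Admissible f n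

def IsSentence (P : Set ℕ) (φ : Fml) : Prop :=
  φ.free = ∅ ∧ φ.predSyms ⊆ P ∧ ∀ f n, (f, n) ∈ φ.funs → S.Admissible f n

def IsSeparator (Q : Set ℕ) (θ : Fml) : Prop := S.IsSentence Q θ ∧ ∀ y ∈ θ.bound, S.K ≤ y

def Separable (Q : Set ℕ) (T U : List Fml) : Prop :=
  ∃ θ, S.IsSeparator Q θ ∧ entailsList T θ ∧ entailsList U θ.neg

variable {S} {Q : Set ℕ}

theorem admissible_odd (m : ℕ) : S.Admissible (S.N + 2 * m + 1) 0 := by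
  intro v _ h
  simp only [Prod.mk.injEq, and_true] at h
  omega

theorem Separable.mono {T T' U U' : List Fml} (hT : T ⊆ T') (hU : U ⊆ U')
    (h : S.Separable Q T U) : S.Separable Q T' U' :=
  let ⟨θ, hθ, hTθ, hUθ⟩ := h
  ⟨θ, hθ, hTθ.mono hT, hUθ.mono hU⟩

theorem Separable.symm {T U : List Fml} (h : S.Separable Q T U) : S.Separable Q U T :=
  let ⟨θ, hθ, hTθ, hUθ⟩ := h
  ⟨θ.neg, hθ, hUθ, fun D hD M a ha hn => hn (hTθ D hD M a ha)⟩

theorem separable_of_inconsistent {T : List Fml} (U : List Fml) (h : entailsList T .fls) :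
    S.Separable Q T U :=
  ⟨.fls, ⟨⟨rfl, by simp [Fml.predSyms], by simp [Fml.funs]⟩, by simp [Fml.bound]⟩, h,
    fun _ _ _ _ _ => id⟩

theorem IsSeparator.disj {θ θ' : Fml} (h : S.IsSeparator Q θ) (h' : S.IsSeparator Q θ') :
    S.IsSeparator Q (.disj θ θ') := by
  obtain ⟨⟨hf, hp, hfn⟩, hb⟩ := h
  obtain ⟨⟨hf', hp', hfn'⟩, hb'⟩ := h'
  refine ⟨⟨?_, Set.union_subset hp hp', ?_⟩, ?_⟩
  · simp [Fml.free, hf, hf']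
  · rintro f n (h | h)
    exacts [hfn f n h, hfn' f n h]
  · rintro y (h | h)
    exacts [hb y h, hb' y h]

theorem not_separable_cons_or {T U : List Fml} (h : ¬S.Separable Q T U) (φ : Fml) :
    ¬S.Separable Q (φ :: T) U ∨ ¬S.Separable Q (φ.neg :: T) U := by
  by_contra! hc
  obtain ⟨⟨θ, hθ, hTθ, hUθ⟩, ⟨θ', hθ', hTθ', hUθ'⟩⟩ := hc
  refine h ⟨.disj θ θ', hθ.disj hθ', fun D hD M a ha => ?_, fun D hD M a ha => ?_⟩
  · by_cases hφ : φ.sat M a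
    · exact Or.inl (hTθ D hD M a (List.forall_mem_cons.2 ⟨hφ, ha⟩))
    · exact Or.inr (hTθ' D hD M a (List.forall_mem_cons.2 ⟨hφ, ha⟩))
  · rintro (hs | hs)
    exacts [hUθ D hD M a ha hs, hUθ' D hD M a ha hs]

theorem exists_fresh_const (L : List Fml) : ∃ m, ∀ φ ∈ L, (S.N + 2 * m + 1, 0) ∉ φ.funs := by
  obtain ⟨B, hB⟩ := ((L.finite_toSet.biUnion fun φ _ => φ.funs_finite).image Prod.fst).bddAbove
  refine ⟨B, fun φ hφ hmem => ?_⟩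
  have := hB ⟨_, Set.mem_biUnion hφ hmem, rfl⟩
  simp only at this
  omega

theorem exists_fresh_var (θ : Fml) : ∃ y, S.K ≤ y ∧ y ∉ θ.bound := by
  obtain ⟨B, hB⟩ := θ.bound_finite.bddAbove
  exact ⟨max S.K (B + 1), le_max_left _ _, fun h => by have := hB h; omega⟩

theorem IsSeparator.exi_abstractConst {θ : Fml} (hθ : S.IsSeparator Q θ) (c : ℕ) {y : ℕ}
    (hy : S.K ≤ y) : S.IsSeparator Q (.exi y (θ.abstractConsts (· = c) fun _ => y)) := by
  obtain ⟨⟨hf, hp, hfn⟩, hb⟩ := hθ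
  refine ⟨⟨?_, ?_, fun f n h => hfn f n (Fml.funs_abstractConsts _ _ θ h)⟩, ?_⟩
  · refine Set.eq_empty_of_forall_notMem fun u ⟨hu, huy⟩ => ?_
    rcases Fml.free_abstractConsts _ _ θ u hu with h | ⟨_, _, rfl⟩
    exacts [by simp [hf] at h, huy rfl]
  · exact (Fml.predSyms_abstractConsts _ _ θ).le.trans hp
  · rintro z (rfl | hz)
    exacts [hy, hb z (Fml.bound_abstractConsts _ _ θ ▸ hz)]

/-- A separator `θ` for the Henkin instance with fresh constant `c` yields the separator
`∃ y, θ[y/c]` for the existential formula itself. -/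
theorem not_separable_witness {T U : List Fml} {x c : ℕ} {ψ : Fml}
    (hT : ∀ φ ∈ Fml.exi x ψ :: T, (c, 0) ∉ φ.funs) (hU : ∀ φ ∈ U, (c, 0) ∉ φ.funs)
    (h : ¬S.Separable Q (.exi x ψ :: T) U) :
    ¬S.Separable Q (ψ.subst (Function.update Tm.var x (Tm.const c)) :: .exi x ψ :: T) U := by
  rintro ⟨θ, hθ, hTθ, hUθ⟩
  obtain ⟨y, hyK, hyb⟩ := exists_fresh_var (S := S) θ
  refine h ⟨_, hθ.exi_abstractConst c hyK, fun D hD M a ha => ?_, fun D hD M a ha => ?_⟩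
  · have hψ : (c, 0) ∉ ψ.funs := hT (.exi x ψ) List.mem_cons_self
    obtain ⟨d, hd⟩ : ∃ d, ψ.sat M (Function.update a x d) := ha _ List.mem_cons_self
    refine ⟨d, (Fml.sat_abstractConst hθ.1.1 hyb d).2 (hTθ D hD _ a ?_)⟩
    rintro φ (_ | ⟨_, hφ⟩)
    · exact (Fml.sat_subst_const_setConsts hψ d).2 hd
    · exact (Fml.sat_setConsts_of_not_mem (hT φ hφ) _).2 (ha φ hφ)
  · rintro ⟨e, he⟩
    exact hUθ D hD _ a (fun φ hφ => (Fml.sat_setConsts_of_not_mem (hU φ hφ) _).2 (ha φ hφ))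
      ((Fml.sat_abstractConst hθ.1.1 hyb e).1 he)

variable {P : Set ℕ}

theorem isSentence_subst {F : Fml} {σ : Subst} (hσ : ∀ v ∈ F.free, S.IsClosedTerm (σ v))
    (hP : F.predSyms ⊆ P) (hF : ∀ f n, (f, n) ∈ F.funs → S.Admissible f n) :
    S.IsSentence P (F.subst σ) := by
  refine ⟨Set.eq_empty_of_forall_notMem fun u hu => ?_, F.predSyms_subst σ ▸ hP, fun f n hf => ?_⟩
  · obtain ⟨v, hv, hu⟩ := F.free_subst σ u hu
    simp [(hσ v hv).1] at hu
  · rcases F.funs_subst σ _ hf with h | ⟨v, hv, h⟩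
    exacts [hF f n h, (hσ v hv).2 f n h]

theorem IsSentence.subst_update {x : ℕ} {ψ : Fml} (hψ : S.IsSentence P (.exi x ψ)) {t : Tm}
    (ht : S.IsClosedTerm t) : S.IsSentence P (ψ.subst (Function.update Tm.var x t)) := by
  refine isSentence_subst (fun v hv => ?_) hψ.2.1 hψ.2.2
  obtain rfl : v = x := by
    by_contra hne
    exact (hψ.1 ▸ (⟨hv, hne⟩ : v ∈ (Fml.exi x ψ).free) : v ∈ (∅ : Set ℕ))
  simpa using ht

theorem isClosedTerm_const {a : ℕ} (ha : S.Admissible a 0) : S.IsClosedTerm (Tm.const a) :=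
  ⟨Tm.vars_const a, fun f n h => by
    obtain ⟨rfl, rfl⟩ := Prod.mk.inj (Set.mem_singleton_iff.1 (Tm.funs_const a ▸ h))
    exact ha⟩

variable (S) in
/-- What step `k` of the completion guarantees for the formula `φ` enumerated at that step. -/
def HenkinStep (P : Set ℕ) (φ : Fml) (T : List Fml) : Prop :=
  S.IsSentence P φ → (φ ∈ T ∨ φ.neg ∈ T) ∧ ∀ x ψ, φ = .exi x ψ → φ ∈ T →
    ∃ c, S.Admissible c 0 ∧ ψ.subst (Function.update Tm.var x (Tm.const c)) ∈ T

theorem exists_extend_exi {T U : List Fml} {x : ℕ} {ψ : Fml}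
    (h : ¬S.Separable Q (.exi x ψ :: T) U) (hT : ∀ φ ∈ Fml.exi x ψ :: T, S.IsSentence P φ) :
    ∃ m, ¬S.Separable Q (ψ.subst (Function.update Tm.var x (Tm.const (S.N + 2 * m + 1))) ::
      .exi x ψ :: T) U ∧ ∀ φ ∈ ψ.subst (Function.update Tm.var x (Tm.const (S.N + 2 * m + 1))) ::
        .exi x ψ :: T, S.IsSentence P φ := by
  obtain ⟨m, hm⟩ := exists_fresh_const (S := S) (.exi x ψ :: T ++ U)
  refine ⟨m, not_separable_witness (fun φ hφ => hm φ (List.mem_append_left _ hφ))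
    (fun φ hφ => hm φ (List.mem_append_right _ hφ)) h, ?_⟩
  rintro φ (_ | ⟨_, hφ⟩)
  exacts [(hT _ List.mem_cons_self).subst_update (isClosedTerm_const (admissible_odd m)), hT φ hφ]

theorem exists_extend {T U : List Fml} (h : ¬S.Separable Q T U)
    (hT : ∀ ψ ∈ T, S.IsSentence P ψ) (φ : Fml) :
    ∃ T', T ⊆ T' ∧ ¬S.Separable Q T' U ∧ (∀ ψ ∈ T', S.IsSentence P ψ) ∧ S.HenkinStep P φ T' := by
  by_cases hφ : S.IsSentence P φ
  swap
  · exact ⟨T, List.Subset.refl T, h, hT, fun h' => absurd h' hφ⟩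
  have hsent : ∀ ψ ∈ φ :: T, S.IsSentence P ψ := List.forall_mem_cons.2 ⟨hφ, hT⟩
  by_cases hpos : S.Separable Q (φ :: T) U
  · have hneg := (not_separable_cons_or h φ).resolve_left (not_not.2 hpos)
    have hφT : φ ∉ T := fun hm => h (hpos.mono (List.cons_subset.2 ⟨hm, List.Subset.refl T⟩)
      (List.Subset.refl U))
    refine ⟨φ.neg :: T, List.subset_cons_self _ _, hneg, List.forall_mem_cons.2 ⟨hφ, hT⟩,
      fun _ => ⟨Or.inr List.mem_cons_self, ?_⟩⟩
    rintro x ψ rfl (_ | ⟨_, hm⟩)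
    exact absurd hm hφT
  · obtain ⟨x, ψ, rfl⟩ | hex := _root_.em (∃ x ψ, φ = .exi x ψ)
    · obtain ⟨m, hsep, hsent'⟩ := exists_extend_exi hpos hsent
      refine ⟨_, List.subset_cons_of_subset _ (List.subset_cons_self _ _), hsep, hsent',
        fun _ => ⟨Or.inl (List.mem_cons_of_mem _ List.mem_cons_self), ?_⟩⟩
      rintro x' ψ' ⟨⟩ -
      exact ⟨_, admissible_odd m, List.mem_cons_self⟩
    · exact ⟨φ :: T, List.subset_cons_self _ _, hpos, hsent,
        fun _ => ⟨Or.inl List.mem_cons_self, fun x ψ he _ => absurd ⟨x, ψ, he⟩ hex⟩⟩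

end Setup

/-! ### Henkin completion and term models -/

def Tm.code : Tm → ℕ
  | .var x => Nat.pair 0 x
  | .app f _ ts => Nat.pair 1 (Nat.pair f (Encodable.encode (List.ofFn fun i => (ts i).code)))

theorem Tm.code_injective : Function.Injective Tm.code := by
  intro t
  induction t with
  | var x => intro u h; cases u <;> simp_all [Tm.code, Nat.pair_eq_pair]
  | app f n ts ih =>
    intro u h
    cases u with
    | var y => simp [Tm.code, Nat.pair_eq_pair] at h
    | app g m us =>
      simp only [Tm.code, Nat.pair_eq_pair, true_and] at h
      obtain ⟨rfl, h⟩ := h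
      have h' := Encodable.encode_injective h
      obtain rfl : n = m := by simpa using congrArg List.length h'
      rw [funext fun i => ih i (congrFun (List.ofFn_injective h') i)]

def Fml.code : Fml → ℕ
  | .tru => Nat.pair 0 0
  | .fls => Nat.pair 1 0
  | .atom p _ ts => Nat.pair 2 (Nat.pair p (Encodable.encode (List.ofFn fun i => (ts i).code)))
  | .neg F => Nat.pair 3 F.code
  | .conj F G => Nat.pair 4 (Nat.pair F.code G.code)
  | .disj F G => Nat.pair 5 (Nat.pair F.code G.code)
  | .all x F => Nat.pair 6 (Nat.pair x F.code)
  | .exi x F => Nat.pair 7 (Nat.pair x F.code)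

theorem Fml.code_injective : Function.Injective Fml.code := by
  intro F
  induction F <;> intro G h <;> cases G <;>
    simp only [Fml.code, Nat.pair_eq_pair] at h
  case atom.atom p n ts q m us =>
    obtain ⟨-, rfl, h⟩ := h
    have h' := Encodable.encode_injective h
    obtain rfl : n = m := by simpa using congrArg List.length h'
    rw [funext fun i => Tm.code_injective (congrFun (List.ofFn_injective h') i)]
  all_goals grind

instance : Countable Fml := ⟨⟨Fml.code, Fml.code_injective⟩⟩

instance : Nonempty Fml := ⟨.tru⟩

noncomputable def Fml.enum : ℕ → Fml := (exists_surjective_nat Fml).choose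

theorem Fml.enum_surjective : Function.Surjective Fml.enum :=
  (exists_surjective_nat Fml).choose_spec

theorem List.exists_subset_of_forall_mem {α : Type} {f : ℕ → List α}
    (hf : ∀ {k l}, k ≤ l → f k ⊆ f l) : ∀ {L : List α}, (∀ a ∈ L, ∃ k, a ∈ f k) → ∃ k, L ⊆ f k
  | [], _ => ⟨0, List.nil_subset _⟩
  | a :: L, h => by
    obtain ⟨k, hk⟩ := h a List.mem_cons_self
    obtain ⟨l, hl⟩ := exists_subset_of_forall_mem hf fun b hb => h b (List.mem_cons_of_mem _ hb)
    exact ⟨max k l, List.cons_subset.2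
      ⟨hf (le_max_left k l) hk, List.Subset.trans hl (hf (le_max_right k l))⟩⟩

namespace Setup

variable {S : Setup} {Q P P₁ P₂ : Set ℕ}

variable (S) in
def IsInseparablePair (Q P₁ P₂ : Set ℕ) (TU : List Fml × List Fml) : Prop :=
  (∀ φ ∈ TU.1, S.IsSentence P₁ φ) ∧ (∀ φ ∈ TU.2, S.IsSentence P₂ φ) ∧ ¬S.Separable Q TU.1 TU.2

theorem IsInseparablePair.swap {TU : List Fml × List Fml} (h : S.IsInseparablePair Q P₁ P₂ TU) :
    S.IsInseparablePair Q P₂ P₁ TU.swap :=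
  ⟨h.2.1, h.1, fun hs => h.2.2 hs.symm⟩

theorem exists_extend_pair {TU : List Fml × List Fml} (h : S.IsInseparablePair Q P₁ P₂ TU)
    (φ : Fml) :
    ∃ TU' : List Fml × List Fml, (TU.1 ⊆ TU'.1 ∧ TU.2 ⊆ TU'.2) ∧ S.IsInseparablePair Q P₁ P₂ TU' ∧
      (S.HenkinStep P₁ φ TU'.1 ∧ S.HenkinStep P₂ φ TU'.2) := by
  obtain ⟨T', hTT', hsep, hT', hstepT⟩ := exists_extend h.2.2 h.1 φ
  obtain ⟨U', hUU', hsep', hU', hstepU⟩ := exists_extend (fun hs => hsep hs.symm) h.2.1 φ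
  exact ⟨(T', U'), ⟨hTT', hUU'⟩, ⟨hT', hU', fun hs => hsep' hs.symm⟩, hstepT, hstepU⟩

variable (S) in
structure HenkinChain (Q P₁ P₂ : Set ℕ) where
  seq : ℕ → List Fml × List Fml
  subset_succ : ∀ k, (seq k).1 ⊆ (seq (k + 1)).1 ∧ (seq k).2 ⊆ (seq (k + 1)).2
  invariant : ∀ k, S.IsInseparablePair Q P₁ P₂ (seq k)
  henkinStep : ∀ k, S.HenkinStep P₁ (Fml.enum k) (seq (k + 1)).1 ∧
    S.HenkinStep P₂ (Fml.enum k) (seq (k + 1)).2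

theorem exists_henkinChain {TU : List Fml × List Fml} (h : S.IsInseparablePair Q P₁ P₂ TU) :
    ∃ c : S.HenkinChain Q P₁ P₂, c.seq 0 = TU := by
  choose! next hsub hinv hstep using
    fun (TU : List Fml × List Fml) (h : S.IsInseparablePair Q P₁ P₂ TU) φ => exists_extend_pair h φ
  let seq : ℕ → List Fml × List Fml := fun k => Nat.rec TU (fun k s => next s (Fml.enum k)) k
  have hseq : ∀ k, S.IsInseparablePair Q P₁ P₂ (seq k) := fun k => by
    induction k with
    | zero => exact h
    | succ k ih => exact hinv _ ih _
  exact ⟨⟨seq, fun k => hsub _ (hseq k) _, hseq, fun k => hstep _ (hseq k) _⟩, rfl⟩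

namespace HenkinChain

variable (c : S.HenkinChain Q P₁ P₂)

def swap : S.HenkinChain Q P₂ P₁ where
  seq k := (c.seq k).swap
  subset_succ k := (c.subset_succ k).symm
  invariant k := (c.invariant k).swap
  henkinStep k := (c.henkinStep k).symm

def fst : Set Fml := {φ | ∃ k, φ ∈ (c.seq k).1}

def snd : Set Fml := c.swap.fst

theorem seq_mono {k l : ℕ} (h : k ≤ l) : (c.seq k).1 ⊆ (c.seq l).1 ∧ (c.seq k).2 ⊆ (c.seq l).2 := by
  induction l, h using Nat.le_induction with
  | base => exact ⟨List.Subset.refl _, List.Subset.refl _⟩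
  | succ l _ ih =>
    exact ⟨List.Subset.trans ih.1 (c.subset_succ l).1, List.Subset.trans ih.2 (c.subset_succ l).2⟩

theorem not_separable_of_subset {T U : List Fml} (hT : ∀ φ ∈ T, φ ∈ c.fst)
    (hU : ∀ φ ∈ U, φ ∈ c.snd) : ¬S.Separable Q T U := by
  obtain ⟨k, hk⟩ := List.exists_subset_of_forall_mem (fun h => (c.seq_mono h).1) hT
  obtain ⟨l, hl⟩ := List.exists_subset_of_forall_mem (fun h => (c.seq_mono h).2) hU
  exact fun hs => (c.invariant (max k l)).2.2
    (hs.mono (List.Subset.trans hk (c.seq_mono (le_max_left k l)).1)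
      (List.Subset.trans hl (c.seq_mono (le_max_right k l)).2))

theorem isSentence_of_mem_fst {φ : Fml} (h : φ ∈ c.fst) : S.IsSentence P₁ φ :=
  let ⟨k, hk⟩ := h
  (c.invariant k).1 φ hk

theorem consistent_fst {L : List Fml} (hL : ∀ φ ∈ L, φ ∈ c.fst) : ¬entailsList L .fls :=
  fun h => c.not_separable_of_subset hL (by simp) (separable_of_inconsistent [] h)

theorem mem_or_neg_mem_fst {φ : Fml} (hφ : S.IsSentence P₁ φ) : φ ∈ c.fst ∨ φ.neg ∈ c.fst := by
  obtain ⟨k, rfl⟩ := Fml.enum_surjective φ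
  exact ((c.henkinStep k).1 hφ).1.imp (fun h => ⟨k + 1, h⟩) (fun h => ⟨k + 1, h⟩)

theorem exists_witness_fst {x : ℕ} {ψ : Fml} (h : Fml.exi x ψ ∈ c.fst) :
    ∃ a, S.Admissible a 0 ∧ ψ.subst (Function.update Tm.var x (Tm.const a)) ∈ c.fst := by
  obtain ⟨k, hk⟩ := Fml.enum_surjective (.exi x ψ)
  have hstep := (c.henkinStep k).1 (hk ▸ c.isSentence_of_mem_fst h)
  rcases hstep.1 with hmem | hmem
  · obtain ⟨a, ha, hinst⟩ := hstep.2 x ψ hk hmem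
    exact ⟨a, ha, k + 1, hinst⟩
  · refine absurd (fun D _ M a hs => ?_) (c.consistent_fst (L := [.exi x ψ, (Fml.exi x ψ).neg]) ?_)
    · exact hs (Fml.exi x ψ).neg (by simp) (hs _ List.mem_cons_self)
    · simpa using ⟨h, k + 1, hk ▸ hmem⟩

end HenkinChain


theorem IsSentence.of_conj {F G : Fml} (h : S.IsSentence P (.conj F G)) :
    S.IsSentence P F ∧ S.IsSentence P G := by
  obtain ⟨hf, hp, hfn⟩ := h
  rw [show (Fml.conj F G).free = F.free ∪ G.free from rfl, Set.union_empty_iff] at hf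
  exact ⟨⟨hf.1, fun r hr => hp (Or.inl hr), fun f n h => hfn f n (Or.inl h)⟩,
    ⟨hf.2, fun r hr => hp (Or.inr hr), fun f n h => hfn f n (Or.inr h)⟩⟩

variable (S) in
structure HenkinSet (P : Set ℕ) where
  carrier : Set Fml
  isSentence : ∀ φ ∈ carrier, S.IsSentence P φ
  consistent : ∀ {L : List Fml}, (∀ φ ∈ L, φ ∈ carrier) → ¬entailsList L .fls
  mem_or_neg_mem : ∀ {φ : Fml}, S.IsSentence P φ → φ ∈ carrier ∨ φ.neg ∈ carrier
  exists_witness : ∀ {x : ℕ} {ψ : Fml}, Fml.exi x ψ ∈ carrier →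
    ∃ a, S.Admissible a 0 ∧ ψ.subst (Function.update Tm.var x (Tm.const a)) ∈ carrier

def HenkinChain.henkinSetFst {Q P₁ P₂ : Set ℕ} (c : S.HenkinChain Q P₁ P₂) : S.HenkinSet P₁ :=
  ⟨c.fst, fun _ => c.isSentence_of_mem_fst, c.consistent_fst, c.mem_or_neg_mem_fst,
    c.exists_witness_fst⟩

variable (S) in
abbrev ClosedTerm : Type := {t : Tm // S.IsClosedTerm t}

instance : Nonempty S.ClosedTerm := ⟨⟨_, isClosedTerm_const (admissible_odd 0)⟩⟩

variable (S) in
noncomputable def termFn (f n : ℕ) (ds : Fin n → S.ClosedTerm) : S.ClosedTerm :=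
  if h : S.Admissible f n then
    ⟨.app f n fun i => (ds i).1, by simp [Tm.vars, fun i => (ds i).2.1], by
      simp only [Tm.funs, Set.mem_insert_iff, Set.mem_iUnion, Prod.mk.injEq]
      rintro g m (⟨rfl, rfl⟩ | ⟨i, hi⟩)
      exacts [h, (ds i).2.2 g m hi]⟩
  else Classical.arbitrary _

theorem eval_of_fn_eq_termFn {M : Struc S.ClosedTerm} (hM : M.fn = S.termFn) {t : Tm}
    (ht : S.IsClosedTerm t) (a : ℕ → S.ClosedTerm) : t.eval M a = ⟨t, ht⟩ := by
  induction t with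
  | var x => exact absurd ht.1 (Set.singleton_ne_empty x)
  | app f n ts ih =>
    obtain ⟨hv, hfn⟩ := ht
    simp only [Tm.vars, Set.iUnion_eq_empty] at hv
    have hts : ∀ i, S.IsClosedTerm (ts i) := fun i =>
      ⟨hv i, fun g m hg => hfn g m (Set.mem_insert_of_mem _ (Set.mem_iUnion.2 ⟨i, hg⟩))⟩
    simp only [Tm.eval, hM, termFn, ih _ (hts _)]
    exact dif_pos (hfn f n (Set.mem_insert _ _))

variable (S) in
noncomputable def termStruc (W : Set Fml) : Struc S.ClosedTerm :=
  ⟨S.termFn, fun r n ds => .atom r n (fun i => (ds i).1) ∈ W⟩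

namespace HenkinSet

variable (W : S.HenkinSet P)

theorem mem_of_entailsList {L : List Fml} {ψ : Fml} (hL : ∀ φ ∈ L, φ ∈ W.carrier)
    (hψ : S.IsSentence P ψ) (h : entailsList L ψ) : ψ ∈ W.carrier :=
  (W.mem_or_neg_mem hψ).resolve_right fun hn =>
    W.consistent (L := ψ.neg :: L) (List.forall_mem_cons.2 ⟨hn, hL⟩) fun D hD M a ha =>
      ha _ List.mem_cons_self (h D hD M a fun φ hφ => ha φ (List.mem_cons_of_mem _ hφ))

theorem neg_mem_iff {φ : Fml} (hφ : S.IsSentence P φ) : φ.neg ∈ W.carrier ↔ φ ∉ W.carrier :=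
  ⟨fun hn h => W.consistent (L := [φ, φ.neg]) (by simp [h, hn])
    fun _ _ _ _ ha => ha φ.neg (by simp) (ha φ List.mem_cons_self),
   (W.mem_or_neg_mem hφ).resolve_left⟩

theorem conj_mem_iff {F G : Fml} (h : S.IsSentence P (.conj F G)) :
    Fml.conj F G ∈ W.carrier ↔ F ∈ W.carrier ∧ G ∈ W.carrier := by
  refine ⟨fun hm => ⟨?_, ?_⟩, fun hm => ?_⟩
  · exact W.mem_of_entailsList (L := [.conj F G]) (by simpa) h.of_conj.1
      fun _ _ _ _ ha => (ha _ List.mem_cons_self).1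
  · exact W.mem_of_entailsList (L := [.conj F G]) (by simpa) h.of_conj.2
      fun _ _ _ _ ha => (ha _ List.mem_cons_self).2
  · exact W.mem_of_entailsList (L := [F, G]) (by simpa) h
      fun _ _ _ _ ha => ⟨ha F (by simp), ha G (by simp)⟩

theorem disj_mem_iff {F G : Fml} (h : S.IsSentence P (.disj F G)) :
    Fml.disj F G ∈ W.carrier ↔ F ∈ W.carrier ∨ G ∈ W.carrier := by
  have hFG : S.IsSentence P F ∧ S.IsSentence P G := IsSentence.of_conj (F := F) (G := G) h
  refine ⟨fun hm => ?_, fun hm => ?_⟩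
  · by_contra! hn
    rw [← W.neg_mem_iff hFG.1, ← W.neg_mem_iff hFG.2] at hn
    refine W.consistent (L := [.disj F G, F.neg, G.neg]) (by simp [hm, hn]) fun _ _ _ _ ha => ?_
    rcases ha _ List.mem_cons_self with hs | hs
    exacts [ha F.neg (by simp) hs, ha G.neg (by simp) hs]
  · rcases hm with hm | hm
    · exact W.mem_of_entailsList (L := [F]) (by simpa) h fun _ _ _ _ ha => Or.inl (ha F (by simp))
    · exact W.mem_of_entailsList (L := [G]) (by simpa) h fun _ _ _ _ ha => Or.inr (ha G (by simp))

theorem exi_mem_iff {x : ℕ} {F : Fml} (h : S.IsSentence P (.exi x F)) :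
    Fml.exi x F ∈ W.carrier ↔
      ∃ t : S.ClosedTerm, F.subst (Function.update Tm.var x t.1) ∈ W.carrier := by
  refine ⟨fun hm => ?_, fun ⟨t, ht⟩ => ?_⟩
  · obtain ⟨a, ha, hinst⟩ := W.exists_witness hm
    exact ⟨⟨_, isClosedTerm_const ha⟩, hinst⟩
  · refine W.mem_of_entailsList (L := [F.subst (Function.update Tm.var x t.1)]) (by simpa) h
      fun _ _ M a ha => ⟨_, (F.sat_subst_update t.2.1 a).1 (ha _ List.mem_cons_self)⟩

theorem all_mem_iff {x : ℕ} {F : Fml} (h : S.IsSentence P (.all x F)) :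
    Fml.all x F ∈ W.carrier ↔
      ∀ t : S.ClosedTerm, F.subst (Function.update Tm.var x t.1) ∈ W.carrier := by
  refine ⟨fun hm t => ?_, fun hm => ?_⟩
  · exact W.mem_of_entailsList (L := [.all x F]) (by simpa) (IsSentence.subst_update h t.2)
      fun _ _ M a ha => (F.sat_subst_update t.2.1 a).2 (ha _ List.mem_cons_self _)
  · by_contra hn
    rw [← W.neg_mem_iff h] at hn
    have hex : Fml.exi x F.neg ∈ W.carrier :=
      W.mem_of_entailsList (L := [(Fml.all x F).neg]) (by simpa) h fun _ _ M a ha => by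
        show ∃ d, ¬F.sat M (Function.update a x d)
        by_contra! hall
        exact ha _ List.mem_cons_self hall
    obtain ⟨t, ht⟩ := (W.exi_mem_iff (F := F.neg) h).1 hex
    exact (W.neg_mem_iff (IsSentence.subst_update h t.2)).1 ht (hm t)

theorem sat_termStruc_iff : ∀ {θ : Fml}, S.IsSentence P θ → ∀ a : ℕ → S.ClosedTerm,
    (θ.sat (S.termStruc W.carrier) a ↔ θ ∈ W.carrier)
  | .tru, hθ, _ => iff_of_true trivial (W.mem_of_entailsList (L := []) (by simp) hθ
      fun _ _ _ _ _ => trivial)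
  | .fls, _, _ => iff_of_false id fun h =>
      W.consistent (L := [.fls]) (by simpa) fun _ _ _ _ ha => ha _ List.mem_cons_self
  | .atom r n ts, hθ, a => by
    have hts : ∀ i, S.IsClosedTerm (ts i) := fun i =>
      ⟨Set.iUnion_eq_empty.1 hθ.1 i, fun f m hf => hθ.2.2 f m (Set.mem_iUnion.2 ⟨i, hf⟩)⟩
    show (Fml.atom r n fun i => (Tm.eval (S.termStruc W.carrier) a (ts i)).1) ∈ W.carrier ↔ _
    simp only [eval_of_fn_eq_termFn (M := S.termStruc W.carrier) rfl (hts _)]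
  | .neg F, hθ, a => by
    rw [W.neg_mem_iff (φ := F) hθ, ← sat_termStruc_iff (θ := F) hθ a]; rfl
  | .conj F G, hθ, a => by
    rw [W.conj_mem_iff hθ, ← sat_termStruc_iff hθ.of_conj.1 a,
      ← sat_termStruc_iff hθ.of_conj.2 a]; rfl
  | .disj F G, hθ, a => by
    have hFG : S.IsSentence P F ∧ S.IsSentence P G := IsSentence.of_conj (F := F) (G := G) hθ
    rw [W.disj_mem_iff hθ, ← sat_termStruc_iff hFG.1 a, ← sat_termStruc_iff hFG.2 a]; rfl
  | .all x F, hθ, a => by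
    rw [W.all_mem_iff hθ]
    refine forall_congr' fun t => ?_
    rw [← sat_termStruc_iff (IsSentence.subst_update hθ t.2) a, F.sat_subst_update t.2.1,
      eval_of_fn_eq_termFn (M := S.termStruc W.carrier) rfl t.2]
  | .exi x F, hθ, a => by
    rw [W.exi_mem_iff hθ]
    refine exists_congr fun t => ?_
    rw [← sat_termStruc_iff (IsSentence.subst_update hθ t.2) a, F.sat_subst_update t.2.1,
      eval_of_fn_eq_termFn (M := S.termStruc W.carrier) rfl t.2]
termination_by θ => θ.size
decreasing_by all_goals simp [Fml.size, Fml.size_subst]; try omega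

end HenkinSet

theorem isSentence_atom {r : ℕ} (hr : r ∈ P) {n : ℕ} (ds : Fin n → S.ClosedTerm) :
    S.IsSentence P (.atom r n fun i => (ds i).1) :=
  ⟨Set.iUnion_eq_empty.2 fun i => (ds i).2.1, by simpa [Fml.predSyms] using hr,
    fun f m hf => let ⟨i, hi⟩ := Set.mem_iUnion.1 hf; (ds i).2.2 f m hi⟩

theorem HenkinChain.mem_snd_of_mem_fst (c : S.HenkinChain Q P₁ P₂) {θ : Fml}
    (hθ : S.IsSeparator Q θ) (h₂ : S.IsSentence P₂ θ) (h : θ ∈ c.fst) : θ ∈ c.snd :=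
  (c.swap.mem_or_neg_mem_fst h₂).resolve_right fun hn =>
    c.not_separable_of_subset (T := [θ]) (U := [θ.neg]) (by simpa) (by simpa)
      ⟨θ, hθ, fun _ _ _ _ ha => ha θ List.mem_cons_self, fun _ _ _ _ ha => ha _ List.mem_cons_self⟩

/-- Robinson's joint consistency theorem. -/
theorem exists_model_of_isInseparablePair (hQ : P₁ ∩ P₂ ⊆ Q) {T U : List Fml}
    (h : S.IsInseparablePair Q P₁ P₂ (T, U)) :
    ∃ M : Struc S.ClosedTerm, ∀ a, (∀ φ ∈ T, φ.sat M a) ∧ ∀ φ ∈ U, φ.sat M a := by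
  obtain ⟨c, hc⟩ := exists_henkinChain h
  have hagree : ∀ r ∈ P₁, r ∈ P₂ → (S.termStruc c.fst).pr r = (S.termStruc c.snd).pr r := by
    intro r h₁ h₂
    funext n ds
    have hθ : S.IsSeparator Q (.atom r n fun i => (ds i).1) :=
      ⟨isSentence_atom (hQ ⟨h₁, h₂⟩) ds, by simp [Fml.bound]⟩
    exact propext ⟨c.mem_snd_of_mem_fst hθ (isSentence_atom h₂ ds),
      c.swap.mem_snd_of_mem_fst hθ (isSentence_atom h₁ ds)⟩
  let M : Struc S.ClosedTerm := ⟨S.termFn, fun r =>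
    if r ∈ P₁ then (S.termStruc c.fst).pr r else (S.termStruc c.snd).pr r⟩
  refine ⟨M, fun a => ⟨fun φ hφ => ?_, fun φ hφ => ?_⟩⟩
  · have hφ₁ := h.1 φ hφ
    exact (φ.sat_congr (M := S.termStruc c.fst) (M' := M) (fun _ _ _ => rfl)
      (fun r hr => (if_pos (hφ₁.2.1 hr)).symm) (fun _ _ => rfl)).1
      ((c.henkinSetFst.sat_termStruc_iff hφ₁ a).2 ⟨0, hc ▸ hφ⟩)
  · have hφ₂ := h.2.1 φ hφ
    refine (φ.sat_congr (M := S.termStruc c.snd) (M' := M) (fun _ _ _ => rfl) (fun r hr => ?_)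
      (fun _ _ => rfl)).1
      ((c.swap.henkinSetFst.sat_termStruc_iff hφ₂ a).2 ⟨0, by simp [HenkinChain.swap, hc, hφ]⟩)
    by_cases hr₁ : r ∈ P₁
    · exact ((if_pos hr₁).trans (hagree r hr₁ (hφ₂.2.1 hr))).symm
    · exact (if_neg hr₁).symm

/-! ### Craig interpolation -/

variable (S) in
def varConst (v : ℕ) : Tm := Tm.const (S.N + 2 * v)

variable (S) in
def IsVarConst (f : ℕ) : Prop := ∃ v, f = S.N + 2 * v

variable (S) in
def constVar (f : ℕ) : ℕ := (f - S.N) / 2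

theorem constVar_add (v : ℕ) : S.constVar (S.N + 2 * v) = v := by
  simp [constVar]

theorem isGround_varConst : Subst.isGround S.varConst := fun _ _ => Tm.vars_const _

theorem isSentence_subst_varConst {F : Fml} (hF : ∀ f n, (f, n) ∈ F.funs → f < S.N)
    (hK : ∀ v ∈ F.free, v < S.K) : S.IsSentence F.predSyms (F.subst S.varConst) := by
  refine isSentence_subst (fun v hv => isClosedTerm_const fun u hu he => ?_) subset_rfl
    fun f n hf u _ he => ?_
  · have := hK v hv
    simp only [Prod.mk.injEq, and_true] at he
    omega
  · have := hF f n hf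
    simp only [Prod.mk.injEq] at he
    omega

theorem sat_subst_varConst {D : Type} {M : Struc D} {a : ℕ → D} {F : Fml}
    (hF : ∀ f n, (f, n) ∈ F.funs → f < S.N) :
    (F.subst S.varConst).sat (M.setConsts S.IsVarConst (a ∘ S.constVar)) a ↔ F.sat M a := by
  have hval : (fun v => (S.varConst v).eval (M.setConsts S.IsVarConst (a ∘ S.constVar)) a) = a :=
    funext fun v => by
      simp [varConst, Tm.const, Tm.eval, Struc.setConsts, IsVarConst, constVar_add]
  rw [F.sat_subst isGround_varConst, hval]
  refine F.sat_congr (fun f n hf => funext fun _ => if_neg ?_) (fun _ _ => rfl) (fun _ _ => rfl)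
  rintro ⟨rfl, v, rfl⟩
  have := hF _ _ hf
  omega

theorem IsSeparator.sat_abstractConsts {D : Type} {M : Struc D} {a : ℕ → D} {θ : Fml}
    (hθ : S.IsSeparator Q θ) :
    (θ.abstractConsts S.IsVarConst S.constVar).sat M a ↔
      θ.sat (M.setConsts S.IsVarConst (a ∘ S.constVar)) a := by
  refine θ.sat_abstractConsts _ _ a fun f ⟨v, hv⟩ hf hb => ?_
  subst hv
  have hvK : v < S.K := by
    by_contra! hK
    exact hθ.1.2.2 _ _ hf v hK rfl
  have := hθ.2 _ hb
  rw [constVar_add] at this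
  omega

end Setup

theorem exists_interpolant {A B : Fml} (h : entails A B) :
    ∃ H, entails A H ∧ entails H B ∧ H.predSyms ⊆ A.predSyms ∩ B.predSyms := by
  obtain ⟨N, hN⟩ := ((A.funs_finite.union B.funs_finite).image Prod.fst).bddAbove
  obtain ⟨K, hK⟩ := (A.free_finite.union B.free_finite).bddAbove
  let S : Setup := ⟨N + 1, K + 1⟩
  have hNA : ∀ f n, (f, n) ∈ A.funs → f < S.N := fun f n hf =>
    Nat.lt_succ_of_le (hN ⟨_, Or.inl hf, rfl⟩)
  have hNB : ∀ f n, (f, n) ∈ B.funs → f < S.N := fun f n hf =>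
    Nat.lt_succ_of_le (hN ⟨_, Or.inr hf, rfl⟩)
  have hsep : S.Separable (A.predSyms ∩ B.predSyms) [A.subst S.varConst]
      [(B.subst S.varConst).neg] := by
    by_contra hns
    obtain ⟨M, hM⟩ := Setup.exists_model_of_isInseparablePair (T := [A.subst S.varConst])
      (U := [(B.subst S.varConst).neg]) subset_rfl
      ⟨List.forall_mem_singleton.2 (Setup.isSentence_subst_varConst hNA fun v hv =>
          Nat.lt_succ_of_le (hK (Or.inl hv))),
        List.forall_mem_singleton.2 (Setup.isSentence_subst_varConst hNB fun v hv =>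
          Nat.lt_succ_of_le (hK (Or.inr hv))), hns⟩
    obtain ⟨hA, hB⟩ := hM (fun _ => Classical.arbitrary _)
    rw [List.forall_mem_singleton, Fml.sat_subst _ Setup.isGround_varConst] at hA
    rw [List.forall_mem_singleton] at hB
    exact hB ((Fml.sat_subst _ Setup.isGround_varConst _).2 (h _ ⟨Classical.arbitrary _⟩ M _ hA))
  obtain ⟨θ, hθ, hAθ, hBθ⟩ := hsep
  refine ⟨θ.abstractConsts S.IsVarConst S.constVar, fun D hD M a hA => ?_,
    fun D hD M a hH => ?_, (Fml.predSyms_abstractConsts _ _ θ).le.trans hθ.1.2.1⟩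
  · exact hθ.sat_abstractConsts.2
      (hAθ D hD _ a (List.forall_mem_singleton.2 ((Setup.sat_subst_varConst hNA).2 hA)))
  · by_contra hB
    exact hBθ D hD _ a
      (List.forall_mem_singleton.2 fun hB' => hB ((Setup.sat_subst_varConst hNB).1 hB'))
      (hθ.sat_abstractConsts.1 hH)

/-! ### Definientia -/

theorem sat_iffFml {D : Type} {M : Struc D} {a : ℕ → D} {A B : Fml} :
    (iffFml A B).sat M a ↔ (A.sat M a ↔ B.sat M a) := by
  simp only [iffFml, Fml.sat]
  tauto

theorem sat_atom1 {D : Type} {M : Struc D} {a : ℕ → D} {p x : ℕ} :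
    (atom1 p x).sat M a ↔ M.pr p 1 (fun _ => a x) :=
  Iff.rfl

theorem isDefiniens_of_entails {F H : Fml} {p x p' : ℕ} (hx : x ∉ F.free)
    (hfresh : p' ∉ F.predSyms) (h₁ : entails (.conj F (atom1 p x)) H)
    (h₂ : entails H (.neg (.conj (F.renamePred p p') (.neg (atom1 p' x)))))
    (hp : p ∉ H.predSyms) (hp' : p' ∉ H.predSyms) : isDefiniens F p x H := by
  refine ⟨fun D hD M a hF d => sat_iffFml.2 ?_, hp⟩
  have hF' : F.sat M (Function.update a x d) :=
    (F.sat_congr (fun _ _ _ => rfl) (fun _ _ => rfl) fun v hv =>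
      (Function.update_of_ne (ne_of_mem_of_not_mem hv hx) _ _).symm).1 hF
  refine ⟨fun hpx => h₁ D hD M _ ⟨hF', hpx⟩, fun hH => ?_⟩
  let Mq := M.updatePred p' (M.pr p)
  have hF'' : (F.renamePred p p').sat Mq (Function.update a x d) := by
    rw [Fml.sat_renamePred]
    refine (F.sat_congr (M := M) (M' := Mq.updatePred p (Mq.pr p')) (fun _ _ _ => rfl)
      (fun r hr => ?_) (fun _ _ => rfl)).1 hF'
    by_cases hrp : r = p
    · subst hrp; simp [Mq, Struc.updatePred]
    · simp [Mq, Struc.updatePred, hrp, ne_of_mem_of_not_mem hr hfresh]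
  have hnn := h₂ D hD Mq _ ((Fml.sat_updatePred_of_not_mem hp' _).2 hH)
  by_contra hn
  refine hnn ⟨hF'', fun hp'x => hn ?_⟩
  simpa [sat_atom1, Mq, Struc.updatePred] using hp'x

theorem entails_of_isDefiniens {F H : Fml} {p x p' : ℕ} (hd : isDefiniens F p x H) :
    entails (.conj F (atom1 p x)) (.neg (.conj (F.renamePred p p') (.neg (atom1 p' x)))) := by
  rintro D hD M a ⟨hF, hpx⟩ ⟨hF', hnp'⟩
  have hdef : ∀ M : Struc D, F.sat M a → ((atom1 p x).sat M a ↔ H.sat M a) := fun M hF => by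
    simpa [sat_iffFml] using hd.1 D hD M a hF (a x)
  let M' := M.updatePred p (M.pr p')
  have hH : H.sat M' a := (Fml.sat_updatePred_of_not_mem hd.2 _).2 ((hdef M hF).1 hpx)
  exact hnp' (by simpa [sat_atom1, M', Struc.updatePred] using
    (hdef M' ((Fml.sat_renamePred p p' F a).1 hF')).2 hH)

/-- Definientia via Craig interpolation. Let `p'` be a fresh unary
predicate and `F'` be `F` with `p` replaced by `p'`, where `x` does not occur free
in `F`. Then (a) every Craig interpolant of F ∧ p(x) and ¬(F' ∧ ¬p'(x)) is a
definiens of `p` within `F`, and (b) a definiens of `p` within `F` exists iff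
F ∧ p(x) ⊨ ¬(F' ∧ ¬p'(x)). -/
theorem statement17 (F : Fml) (p x p' : ℕ)
    (hx : x ∉ F.free) (hfresh : p' ∉ F.predSyms) (hpp' : p' ≠ p) :
    (∀ H : Fml,
      CraigInterp (.conj F (atom1 p x))
        (.neg (.conj (F.renamePred p p') (.neg (atom1 p' x)))) H →
      isDefiniens F p x H) ∧
    ((∃ H : Fml, isDefiniens F p x H) ↔
      entails (.conj F (atom1 p x))
        (.neg (.conj (F.renamePred p p') (.neg (atom1 p' x))))) := by
  have hsyms : ∀ H : Fml, H.predSyms ⊆ (Fml.conj F (atom1 p x)).predSyms ∩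
      (Fml.neg (.conj (F.renamePred p p') (.neg (atom1 p' x)))).predSyms →
      p ∉ H.predSyms ∧ p' ∉ H.predSyms := by
    intro H hH
    refine ⟨fun hp => ?_, fun hp' => ?_⟩
    · rcases (hH hp).2 with h | h
      exacts [F.not_mem_predSyms_renamePred hpp' h, hpp' h.symm]
    · rcases (hH hp').1 with h | h
      exacts [hfresh h, hpp' h]
  refine ⟨fun H ⟨h₁, h₂, hH, _⟩ => isDefiniens_of_entails hx hfresh h₁ h₂ (hsyms H hH).1
    (hsyms H hH).2, fun ⟨H, hH⟩ => entails_of_isDefiniens hH, fun h => ?_⟩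
  obtain ⟨H, h₁, h₂, hH⟩ := exists_interpolant h
  exact ⟨H, isDefiniens_of_entails hx hfresh h₁ h₂ (hsyms H hH).1 (hsyms H hH).2⟩

end CTIF
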